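/- Let f ∈ W^{1,p}_{δ}(ℝ^n \ B̄_1(0)) with p>n. Then there is a constant C (depending only on n, p, δ) such that |f(x)| ≤ C ‖f‖_{W^{1,p}_δ} σ(x)^{δ} for all x, where σ(x)=√(1+|x|²). -/

import Mathlib

open MeasureTheory Finset ENNReal
noncomputable section

/-- Euclidean space ℝⁿ. -/
abbrev Eu (n : ℕ) := EuclideanSpace ℝ (Fin n)

/-- The weight function σ(x) = √(1+|x|²). -/
def sg {n : ℕ} (x : Eu n) : ℝ := Real.sqrt (1 + ‖x‖^2)

/-- The exterior region {x : R < |x|}; for R = 1 this is ℝⁿ \ B̄₁(0). -/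
def ext (n : ℕ) (R : ℝ) : Set (Eu n) := {x | R < ‖x‖}

/-- Weighted Sobolev norm ‖u‖_{W^{k,p}_δ} = Σ_{j=0}^k ‖∇ʲu · σ^{-(δ-j)-n/p}‖_{L^p} on the
exterior region (each summand is ‖σ^{-(δ-j)-n/p} ∇ʲ u‖_{L^p}, written with exponents
multiplied out inside the integral). -/
def wnorm (n k : ℕ) (p δ R : ℝ) {F : Type} [NormedAddCommGroup F] [NormedSpace ℝ F]
    (u : Eu n → F) : ℝ≥0∞ :=
  ∑ j ∈ Finset.range (k+1),
    (∫⁻ x in ext n R,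
      ENNReal.ofReal (‖iteratedFDerivWithin ℝ j u (ext n R) x‖ ^ p
        * sg x ^ (((j : ℝ) - δ) * p - n))) ^ (1/p : ℝ)

/-- Membership in the weighted Sobolev space W^{k,p}_δ on the exterior region. -/
def memW (n k : ℕ) (p δ R : ℝ) {F : Type} [NormedAddCommGroup F] [NormedSpace ℝ F]
    (u : Eu n → F) : Prop :=
  ContDiffOn ℝ k u (ext n R) ∧ wnorm n k p δ R u < ⊤

/-!
Morrey's argument on a ball adapted to the weight. For `|x| > 1` put `S = σ(x)` and let `B` be the
ball of radius `r = S/2` touching the sphere `{|z| = |x|}` at `x` from outside. Then `B` lies in the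
exterior domain and `S ≤ σ ≤ 2S` on `B`. Averaging `f(x) = f(z) - ∫₀¹ Df(x + t(z - x))(z - x) dt`
over `z ∈ B`, Hölder's inequality and the change of variables `z ↦ x + t(z - x)` (Jacobian `tⁿ`)
give `|f(x)| |B|^{1/p} ≤ ‖f‖_{L^p(B)} + 2r (1 - n/p)⁻¹ ‖Df‖_{L^p(B)}`; `p > n` is exactly what makes
`∫₀¹ t^{-n/p} dt` finite. As `|B| ≈ Sⁿ` and `σ ≈ S` on `B`, the powers of `S` cancel against the
weights of the `W^{1,p}_δ` norm.
-/

open Metric Set Module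

section NormedSpace

variable {E F : Type*} [NormedAddCommGroup E] [NormedSpace ℝ E]
  [NormedAddCommGroup F] [NormedSpace ℝ F] [CompleteSpace F]

theorem add_smul_sub_mem_ball {c x z : E} {r t : ℝ} (hx : x ∈ closedBall c r)
    (hz : z ∈ ball c r) (ht : t ∈ Ioc (0 : ℝ) 1) : x + t • (z - x) ∈ ball c r := by
  have hr : r ≠ 0 := (pos_of_mem_ball hz).ne'
  simpa only [isOpen_ball.interior_eq] using (convex_ball c r).add_smul_sub_mem_interior'
    (by rwa [closure_ball c hr]) (by rwa [isOpen_ball.interior_eq]) ht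

theorem enorm_sub_le_lintegral_fderiv_segment {s : Set E} (hs : IsOpen s) {f : E → F}
    (hf : ContDiffOn ℝ 1 f s) {x z : E} (hseg : ∀ t ∈ Icc (0 : ℝ) 1, x + t • (z - x) ∈ s) :
    ‖f z - f x‖ₑ ≤ ‖z - x‖ₑ * ∫⁻ t in Ioc (0 : ℝ) 1, ‖fderiv ℝ f (x + t • (z - x))‖ₑ := by
  set γ : ℝ → E := fun t => x + t • (z - x)
  have hγ : ∀ t, HasDerivAt γ (z - x) t := fun t => by
    simpa [γ] using ((hasDerivAt_id t).smul_const (z - x)).const_add x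
  have hderiv : ∀ t ∈ uIcc (0 : ℝ) 1, HasDerivAt (f ∘ γ) (fderiv ℝ f (γ t) (z - x)) t := by
    intro t ht
    rw [Set.uIcc_of_le zero_le_one] at ht
    have hfγ := (hf.differentiableOn one_ne_zero _ (hseg t ht)).differentiableAt
      (hs.mem_nhds (hseg t ht))
    exact hfγ.hasFDerivAt.comp_hasDerivAt t (hγ t)
  have hcont : ContinuousOn (fun t => fderiv ℝ f (γ t) (z - x)) (uIcc 0 1) := by
    rw [Set.uIcc_of_le zero_le_one]
    exact ((hf.continuousOn_fderiv_of_isOpen hs le_rfl).comp (by fun_prop) hseg).clm_apply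
      continuousOn_const
  have hftc := intervalIntegral.integral_eq_sub_of_hasDerivAt hderiv hcont.intervalIntegrable
  calc ‖f z - f x‖ₑ = ‖∫ t in Ioc (0 : ℝ) 1, fderiv ℝ f (γ t) (z - x)‖ₑ := by
        rw [← intervalIntegral.integral_of_le zero_le_one, hftc]
        simp [γ]
    _ ≤ ∫⁻ t in Ioc (0 : ℝ) 1, ‖fderiv ℝ f (γ t) (z - x)‖ₑ := enorm_integral_le_lintegral_enorm _
    _ ≤ ∫⁻ t in Ioc (0 : ℝ) 1, ‖z - x‖ₑ * ‖fderiv ℝ f (γ t)‖ₑ := by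
        gcongr with t
        rw [mul_comm]
        exact (fderiv ℝ f (γ t)).le_opENorm (z - x)
    _ = _ := lintegral_const_mul' _ _ enorm_ne_top

theorem norm_add_div_norm_smul_self {x : E} (hx : x ≠ 0) {r : ℝ} (hr : 0 ≤ r) :
    ‖x + (r / ‖x‖) • x‖ = ‖x‖ + r := by
  have hx' : 0 < ‖x‖ := norm_pos_iff.2 hx
  rw [show x + (r / ‖x‖) • x = (1 + r / ‖x‖) • x by rw [add_smul, one_smul], norm_smul,
    Real.norm_of_nonneg (by positivity)]
  field_simp

theorem norm_mem_ball_add_div_norm_smul_self {x z : E} (hx : x ≠ 0) {r : ℝ} (hr : 0 ≤ r)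
    (hz : z ∈ ball (x + (r / ‖x‖) • x) r) : ‖x‖ < ‖z‖ ∧ ‖z‖ < ‖x‖ + 2 * r := by
  rw [mem_ball, dist_eq_norm] at hz
  have hc := norm_add_div_norm_smul_self hx hr
  constructor
  · linarith [norm_sub_norm_le (x + (r / ‖x‖) • x) z, norm_sub_rev z (x + (r / ‖x‖) • x)]
  · linarith [norm_le_norm_add_norm_sub' z (x + (r / ‖x‖) • x)]

end NormedSpace

theorem lintegral_le_lintegral_rpow_mul_measure_univ {α : Type*} [MeasurableSpace α]
    (μ : Measure α) {p q : ℝ} (hpq : p.HolderConjugate q) {g : α → ℝ≥0∞}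
    (hg : AEMeasurable g μ) :
    ∫⁻ a, g a ∂μ ≤ (∫⁻ a, g a ^ p ∂μ) ^ (1 / p) * μ univ ^ (1 / q) := by
  simpa using ENNReal.lintegral_mul_le_Lp_mul_Lq μ hpq hg (aemeasurable_const (b := 1))

theorem lintegral_Ioc_rpow {a : ℝ} (ha : -1 < a) :
    ∫⁻ t in Ioc (0 : ℝ) 1, ENNReal.ofReal (t ^ a) = ENNReal.ofReal (1 / (a + 1)) := by
  have hint : IntegrableOn (fun t : ℝ => t ^ a) (Ioc 0 1) := by
    simpa [intervalIntegrable_iff_integrableOn_Ioc_of_le zero_le_one] using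
      intervalIntegral.intervalIntegrable_rpow' (a := 0) (b := 1) ha
  rw [← ofReal_integral_eq_lintegral_ofReal hint
    ((ae_restrict_iff' measurableSet_Ioc).2 (ae_of_all _ fun t ht => Real.rpow_nonneg ht.1.le a)),
    ← intervalIntegral.integral_of_le zero_le_one, integral_rpow (Or.inl ha),
    Real.one_rpow, Real.zero_rpow (by linarith), sub_zero]

theorem rpow_le_two_rpow_abs_mul_rpow {S w e : ℝ} (hS : 0 < S) (hSw : S ≤ w) (hw : w ≤ 2 * S) :
    S ^ e ≤ 2 ^ |e| * w ^ e := by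
  rcases le_total 0 e with he | he
  · calc S ^ e ≤ w ^ e := Real.rpow_le_rpow hS.le hSw he
      _ ≤ 2 ^ |e| * w ^ e :=
        le_mul_of_one_le_left (Real.rpow_nonneg (hS.le.trans hSw) e)
          (Real.one_le_rpow one_le_two (abs_nonneg e))
  · calc S ^ e = 2 ^ |e| * (2 * S) ^ e := by
          rw [abs_of_nonpos he, Real.mul_rpow zero_le_two hS.le, ← mul_assoc,
            ← Real.rpow_add two_pos, neg_add_cancel, Real.rpow_zero, one_mul]
      _ ≤ 2 ^ |e| * w ^ e :=
          mul_le_mul_of_nonneg_left (Real.rpow_le_rpow_of_nonpos (hS.trans_le hSw) hw he)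
            (by positivity)

theorem rpow_mul_setLIntegral_rpow_le {α G : Type*} [MeasurableSpace α] [NormedAddCommGroup G]
    {μ : Measure α} {A B : Set α} (hB : MeasurableSet B) (hBA : B ⊆ A) {w : α → ℝ} {S : ℝ}
    (hS : 0 < S) (hw : ∀ a ∈ B, S ≤ w a ∧ w a ≤ 2 * S) (g : α → G) {p : ℝ} (hp : 0 < p)
    (s : ℝ) :
    ENNReal.ofReal (S ^ s) * (∫⁻ a in B, ‖g a‖ₑ ^ p ∂μ) ^ (1 / p) ≤
      ENNReal.ofReal (2 ^ |s|) *
        (∫⁻ a in A, ENNReal.ofReal (‖g a‖ ^ p * w a ^ (s * p)) ∂μ) ^ (1 / p) := by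
  have hp' : 0 ≤ 1 / p := by positivity
  have hroot : ∀ {b t : ℝ}, 0 < b →
      ENNReal.ofReal (b ^ t) = ENNReal.ofReal (b ^ (t * p)) ^ (1 / p) := fun hb => by
    rw [ENNReal.ofReal_rpow_of_nonneg (by positivity) hp', ← Real.rpow_mul hb.le, mul_assoc,
      mul_one_div_cancel hp.ne', mul_one]
  have hpoint : ∀ a ∈ B, ENNReal.ofReal (S ^ (s * p)) * ‖g a‖ₑ ^ p ≤
      ENNReal.ofReal (2 ^ (|s| * p)) * ENNReal.ofReal (‖g a‖ ^ p * w a ^ (s * p)) := by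
    intro a ha
    rw [← ofReal_norm, ENNReal.ofReal_rpow_of_nonneg (norm_nonneg _) hp.le,
      ← ENNReal.ofReal_mul (by positivity), ← ENNReal.ofReal_mul (by positivity)]
    refine ENNReal.ofReal_le_ofReal ?_
    have h := rpow_le_two_rpow_abs_mul_rpow (e := s * p) hS (hw a ha).1 (hw a ha).2
    rw [abs_mul, abs_of_pos hp] at h
    calc S ^ (s * p) * ‖g a‖ ^ p ≤ 2 ^ (|s| * p) * w a ^ (s * p) * ‖g a‖ ^ p := by gcongr
      _ = _ := by ring
  calc ENNReal.ofReal (S ^ s) * (∫⁻ a in B, ‖g a‖ₑ ^ p ∂μ) ^ (1 / p)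
      = (∫⁻ a in B, ENNReal.ofReal (S ^ (s * p)) * ‖g a‖ₑ ^ p ∂μ) ^ (1 / p) := by
        rw [lintegral_const_mul' _ _ ENNReal.ofReal_ne_top, ENNReal.mul_rpow_of_nonneg _ _ hp',
          hroot hS]
    _ ≤ (∫⁻ a in B, ENNReal.ofReal (2 ^ (|s| * p)) *
          ENNReal.ofReal (‖g a‖ ^ p * w a ^ (s * p)) ∂μ) ^ (1 / p) := by
        gcongr ?_ ^ _
        exact setLIntegral_mono' hB hpoint
    _ ≤ (∫⁻ a in A, ENNReal.ofReal (2 ^ (|s| * p)) *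
          ENNReal.ofReal (‖g a‖ ^ p * w a ^ (s * p)) ∂μ) ^ (1 / p) := by
        gcongr ?_ ^ _
        exact lintegral_mono_set hBA
    _ = _ := by
        rw [lintegral_const_mul' _ _ ENNReal.ofReal_ne_top, ENNReal.mul_rpow_of_nonneg _ _ hp',
          ← hroot two_pos]

section FiniteDimensional

variable {E F : Type*} [NormedAddCommGroup E] [NormedSpace ℝ E] [FiniteDimensional ℝ E]
  [MeasurableSpace E] [BorelSpace E] [NormedAddCommGroup F] [NormedSpace ℝ F] [CompleteSpace F]

theorem measure_mul_enorm_le_lintegral_ball (μ : Measure E) [SFinite μ] {s : Set E}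
    (hs : IsOpen s) {f : E → F} (hf : ContDiffOn ℝ 1 f s) {c x : E} {r : ℝ}
    (hBs : ball c r ⊆ s) (hx : x ∈ s) (hxc : x ∈ closedBall c r) :
    μ (ball c r) * ‖f x‖ₑ ≤ ∫⁻ z in ball c r, ‖f z‖ₑ ∂μ + ENNReal.ofReal (2 * r) *
      ∫⁻ t in Ioc (0 : ℝ) 1, ∫⁻ z in ball c r, ‖fderiv ℝ f (x + t • (z - x))‖ₑ ∂μ := by
  have hpoint : ∀ z ∈ ball c r, ‖f x‖ₑ ≤ ‖f z‖ₑ + ENNReal.ofReal (2 * r) *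
      ∫⁻ t in Ioc (0 : ℝ) 1, ‖fderiv ℝ f (x + t • (z - x))‖ₑ := by
    intro z hz
    have hseg : ∀ t ∈ Icc (0 : ℝ) 1, x + t • (z - x) ∈ s := by
      rintro t ⟨ht0, ht1⟩
      rcases ht0.eq_or_lt with rfl | ht0
      · simpa using hx
      · exact hBs (add_smul_sub_mem_ball hxc hz ⟨ht0, ht1⟩)
    have hzx : ‖z - x‖ₑ ≤ ENNReal.ofReal (2 * r) := by
      rw [← ofReal_norm, ← dist_eq_norm]
      exact ENNReal.ofReal_le_ofReal <| (dist_triangle_right z x c).trans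
        (by linarith [mem_ball.1 hz, mem_closedBall.1 hxc])
    calc ‖f x‖ₑ ≤ ‖f z‖ₑ + ‖f z - f x‖ₑ := by
          simpa using enorm_sub_le (a := f z) (b := f z - f x)
      _ ≤ _ := by
          gcongr
          exact (enorm_sub_le_lintegral_fderiv_segment hs hf hseg).trans (by gcongr)
  have hmeas : Measurable fun zt : E × ℝ => ‖fderiv ℝ f (x + zt.2 • (zt.1 - x))‖ₑ := by
    fun_prop
  calc μ (ball c r) * ‖f x‖ₑ = ∫⁻ _ in ball c r, ‖f x‖ₑ ∂μ := by
        rw [setLIntegral_const, mul_comm]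
    _ ≤ ∫⁻ z in ball c r, (‖f z‖ₑ + ENNReal.ofReal (2 * r) *
          ∫⁻ t in Ioc (0 : ℝ) 1, ‖fderiv ℝ f (x + t • (z - x))‖ₑ) ∂μ :=
        setLIntegral_mono' measurableSet_ball hpoint
    _ = _ := by
        have hfm : AEMeasurable (fun z => ‖f z‖ₑ) (μ.restrict (ball c r)) :=
          (continuous_enorm.comp_continuousOn (hf.continuousOn.mono hBs)).aemeasurable
            measurableSet_ball
        rw [lintegral_add_left' hfm, lintegral_const_mul' _ _ ENNReal.ofReal_ne_top,
          lintegral_lintegral_swap hmeas.aemeasurable]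

theorem lintegral_comp_homothety (μ : Measure E) [μ.IsAddHaarMeasure] (g : E → ℝ≥0∞) (x : E)
    {t : ℝ} (ht : 0 < t) :
    ∫⁻ z, g (x + t • (z - x)) ∂μ = ENNReal.ofReal (t ^ finrank ℝ E)⁻¹ * ∫⁻ y, g y ∂μ := by
  have hφ : ∀ z : E, x + t • (z - x) = (x - t • x) + t • z := fun z => by
    rw [smul_sub]; abel
  calc ∫⁻ z, g (x + t • (z - x)) ∂μ
      = ∫⁻ w, g ((x - t • x) + w) ∂(μ.map (MeasurableEquiv.smul₀ t ht.ne')) := by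
        rw [lintegral_map_equiv]; simp [hφ]
    _ = _ := by
        rw [MeasurableEquiv.coe_smul₀, Measure.map_addHaar_smul μ ht.ne', lintegral_smul_measure,
          lintegral_add_left_eq_self, abs_of_pos (by positivity), smul_eq_mul]

theorem setLIntegral_comp_homothety_le (μ : Measure E) [μ.IsAddHaarMeasure] {B : Set E}
    (hB : MeasurableSet B) {x : E} {t : ℝ} (ht : 0 < t) (hBt : ∀ z ∈ B, x + t • (z - x) ∈ B)
    (g : E → ℝ≥0∞) :
    ∫⁻ z in B, g (x + t • (z - x)) ∂μ ≤
      ENNReal.ofReal (t ^ finrank ℝ E)⁻¹ * ∫⁻ y in B, g y ∂μ := by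
  calc ∫⁻ z in B, g (x + t • (z - x)) ∂μ = ∫⁻ z in B, B.indicator g (x + t • (z - x)) ∂μ :=
        setLIntegral_congr_fun hB fun z hz => (indicator_of_mem (hBt z hz) g).symm
    _ ≤ ∫⁻ z, B.indicator g (x + t • (z - x)) ∂μ := setLIntegral_le_lintegral _ _
    _ = _ := by rw [lintegral_comp_homothety μ _ x ht, lintegral_indicator hB]

theorem setLIntegral_comp_homothety_le_rpow (μ : Measure E) [μ.IsAddHaarMeasure] {B : Set E}
    (hB : MeasurableSet B) {x : E} {t : ℝ} (ht : 0 < t) (hBt : ∀ z ∈ B, x + t • (z - x) ∈ B)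
    {g : E → ℝ≥0∞} (hg : Measurable g) {p q : ℝ} (hpq : p.HolderConjugate q) :
    ∫⁻ z in B, g (x + t • (z - x)) ∂μ ≤
      ENNReal.ofReal (t ^ (-(finrank ℝ E / p))) * (∫⁻ y in B, g y ^ p ∂μ) ^ (1 / p) *
        μ B ^ (1 / q) := by
  have hp : 0 ≤ 1 / p := one_div_nonneg.2 hpq.nonneg
  calc ∫⁻ z in B, g (x + t • (z - x)) ∂μ
      ≤ (∫⁻ z in B, g (x + t • (z - x)) ^ p ∂μ) ^ (1 / p) * μ B ^ (1 / q) := by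
        simpa using lintegral_le_lintegral_rpow_mul_measure_univ (μ.restrict B) hpq
          (hg.comp (by fun_prop)).aemeasurable
    _ ≤ (ENNReal.ofReal (t ^ finrank ℝ E)⁻¹ * ∫⁻ y in B, g y ^ p ∂μ) ^ (1 / p) *
          μ B ^ (1 / q) := by
        gcongr
        exact setLIntegral_comp_homothety_le μ hB ht hBt (g · ^ p)
    _ = _ := by
        rw [ENNReal.mul_rpow_of_nonneg _ _ hp, ENNReal.ofReal_rpow_of_nonneg (by positivity) hp,
          ← Real.rpow_natCast, ← Real.rpow_neg ht.le, ← Real.rpow_mul ht.le, neg_mul,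
          mul_one_div]

theorem addHaar_ball_rpow (μ : Measure E) [μ.IsAddHaarMeasure] (c : E) {r p : ℝ} (hr : 0 < r)
    (hp : 0 < p) :
    μ (ball c r) ^ (1 / p) = ENNReal.ofReal (r ^ (finrank ℝ E / p)) * μ (ball 0 1) ^ (1 / p) := by
  rw [Measure.addHaar_ball_of_pos _ _ hr, ENNReal.mul_rpow_of_nonneg _ _ (by positivity),
    ENNReal.ofReal_rpow_of_nonneg (by positivity) (by positivity), ← Real.rpow_natCast,
    ← Real.rpow_mul hr.le, mul_one_div]

theorem enorm_mul_measure_ball_rpow_le (μ : Measure E) [μ.IsAddHaarMeasure] {s : Set E}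
    (hs : IsOpen s) {f : E → F} (hf : ContDiffOn ℝ 1 f s) {c x : E} {r : ℝ} (hr : 0 < r)
    (hBs : ball c r ⊆ s) (hx : x ∈ s) (hxc : x ∈ closedBall c r) {p : ℝ} (hp : 1 < p)
    (hdp : (finrank ℝ E : ℝ) < p) :
    ‖f x‖ₑ * μ (ball c r) ^ (1 / p) ≤ (∫⁻ z in ball c r, ‖f z‖ₑ ^ p ∂μ) ^ (1 / p) +
      ENNReal.ofReal (2 * r / (1 - finrank ℝ E / p)) *
        (∫⁻ z in ball c r, ‖fderiv ℝ f z‖ₑ ^ p ∂μ) ^ (1 / p) := by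
  set B := ball c r
  set d : ℝ := (finrank ℝ E : ℝ)
  set A₀ := (∫⁻ z in B, ‖f z‖ₑ ^ p ∂μ) ^ (1 / p)
  set A₁ := (∫⁻ z in B, ‖fderiv ℝ f z‖ₑ ^ p ∂μ) ^ (1 / p)
  have hpq := Real.HolderConjugate.conjExponent hp
  set q := p.conjExponent
  have hd : 0 < 1 - d / p := by rw [sub_pos, div_lt_one (by linarith)]; exact hdp
  have hf₀ : ∫⁻ z in B, ‖f z‖ₑ ∂μ ≤ A₀ * μ B ^ (1 / q) :=
    (lintegral_le_lintegral_rpow_mul_measure_univ (μ.restrict B) hpq (g := (‖f ·‖ₑ))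
      ((continuous_enorm.comp_continuousOn (hf.continuousOn.mono hBs)).aemeasurable
        measurableSet_ball)).trans_eq (by rw [Measure.restrict_apply_univ])
  have hf₁ : ∫⁻ t in Ioc (0 : ℝ) 1, ∫⁻ z in B, ‖fderiv ℝ f (x + t • (z - x))‖ₑ ∂μ ≤
      ENNReal.ofReal (1 / (1 - d / p)) * (A₁ * μ B ^ (1 / q)) := by
    calc ∫⁻ t in Ioc (0 : ℝ) 1, ∫⁻ z in B, ‖fderiv ℝ f (x + t • (z - x))‖ₑ ∂μ
        ≤ ∫⁻ t in Ioc (0 : ℝ) 1, ENNReal.ofReal (t ^ (-(d / p))) * (A₁ * μ B ^ (1 / q)) :=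
          setLIntegral_mono' measurableSet_Ioc fun t ht =>
            (setLIntegral_comp_homothety_le_rpow μ measurableSet_ball ht.1
              (fun z hz => add_smul_sub_mem_ball hxc hz ht) (by fun_prop) hpq).trans_eq
              (mul_assoc _ _ _)
      _ = ENNReal.ofReal (1 / (1 - d / p)) * (A₁ * μ B ^ (1 / q)) := by
          rw [lintegral_mul_const _ (by fun_prop), lintegral_Ioc_rpow (by linarith),
            neg_add_eq_sub]
  have hB₀ : μ B ^ (1 / q) ≠ 0 :=
    (ENNReal.rpow_pos (measure_ball_pos μ c hr) measure_ball_lt_top.ne).ne'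
  have hBt : μ B ^ (1 / q) ≠ ⊤ :=
    ENNReal.rpow_ne_top_of_nonneg (one_div_nonneg.2 hpq.symm.nonneg) measure_ball_lt_top.ne
  refine (ENNReal.mul_le_mul_iff_left hB₀ hBt).1 ?_
  calc ‖f x‖ₑ * μ B ^ (1 / p) * μ B ^ (1 / q) = μ B * ‖f x‖ₑ := by
        rw [mul_assoc, ← ENNReal.rpow_add _ _ (measure_ball_pos μ c hr).ne'
          measure_ball_lt_top.ne, one_div, one_div, hpq.inv_add_inv_eq_one, ENNReal.rpow_one,
          mul_comm]
    _ ≤ ∫⁻ z in B, ‖f z‖ₑ ∂μ + ENNReal.ofReal (2 * r) *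
          ∫⁻ t in Ioc (0 : ℝ) 1, ∫⁻ z in B, ‖fderiv ℝ f (x + t • (z - x))‖ₑ ∂μ :=
        measure_mul_enorm_le_lintegral_ball μ hs hf hBs hx hxc
    _ ≤ A₀ * μ B ^ (1 / q) + ENNReal.ofReal (2 * r) *
          (ENNReal.ofReal (1 / (1 - d / p)) * (A₁ * μ B ^ (1 / q))) := by
        gcongr
    _ = (A₀ + ENNReal.ofReal (2 * r / (1 - d / p)) * A₁) * μ B ^ (1 / q) := by
        rw [div_eq_mul_one_div (2 * r), ENNReal.ofReal_mul (p := 2 * r) (by positivity)]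
        ring

end FiniteDimensional

section Weight

variable {n : ℕ}

theorem sg_pos (x : Eu n) : 0 < sg x := Real.sqrt_pos.2 (by positivity)

theorem sg_le_sg {x y : Eu n} (h : ‖x‖ ≤ ‖y‖) : sg x ≤ sg y :=
  Real.sqrt_le_sqrt (by gcongr)

theorem sg_le_sg_add {x y : Eu n} {m : ℝ} (hm : 0 ≤ m) (h : ‖y‖ ≤ ‖x‖ + m) :
    sg y ≤ sg x + m := by
  have hx : ‖x‖ ≤ sg x := Real.le_sqrt_of_sq_le (by linarith)
  have hsq : sg x ^ 2 = 1 + ‖x‖ ^ 2 := Real.sq_sqrt (by positivity)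
  refine Real.sqrt_le_iff.2 ⟨by linarith [sg_pos x], ?_⟩
  nlinarith [norm_nonneg y, norm_nonneg x]

theorem isOpen_ext (R : ℝ) : IsOpen (ext n R) := isOpen_lt continuous_const continuous_norm

theorem pos_of_mem_ext {R : ℝ} (hR : 0 ≤ R) {x : Eu n} (hx : x ∈ ext n R) : 0 < n := by
  have hx0 : x ≠ 0 := norm_pos_iff.1 (hR.trans_lt hx)
  simpa using (Module.finrank_pos_iff_exists_ne_zero (R := ℝ)).2 ⟨x, hx0⟩

theorem exists_ball_subset_ext_sg_le {x : Eu n} (hx : x ∈ ext n 1) :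
    ∃ c, x ∈ closedBall c (sg x / 2) ∧ ball c (sg x / 2) ⊆ ext n 1 ∧
      ∀ z ∈ ball c (sg x / 2), sg x ≤ sg z ∧ sg z ≤ 2 * sg x := by
  have hx1 : 1 < ‖x‖ := hx
  have hx0 : x ≠ 0 := norm_pos_iff.1 (by linarith)
  have hr : 0 ≤ sg x / 2 := (half_pos (sg_pos x)).le
  have hball : ∀ z ∈ ball (x + (sg x / 2 / ‖x‖) • x) (sg x / 2),
      ‖x‖ < ‖z‖ ∧ ‖z‖ < ‖x‖ + 2 * (sg x / 2) := fun z hz =>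
    norm_mem_ball_add_div_norm_smul_self hx0 hr hz
  refine ⟨x + (sg x / 2 / ‖x‖) • x, ?_, fun z hz => hx1.trans (hball z hz).1,
    fun z hz => ⟨sg_le_sg (hball z hz).1.le, ?_⟩⟩
  · rw [mem_closedBall, dist_eq_norm, sub_add_cancel_left, norm_neg, norm_smul,
      Real.norm_of_nonneg (by positivity), div_mul_cancel₀ _ (norm_ne_zero_iff.2 hx0)]
  · linarith [sg_le_sg_add (by positivity) (hball z hz).2.le]

end Weight

theorem wnorm_one_eq {n : ℕ} {p δ R : ℝ} {F : Type} [NormedAddCommGroup F] [NormedSpace ℝ F]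
    (u : Eu n → F) :
    wnorm n 1 p δ R u =
      (∫⁻ x in ext n R, ENNReal.ofReal (‖u x‖ ^ p * sg x ^ ((0 - δ) * p - n))) ^ (1 / p) +
      (∫⁻ x in ext n R,
        ENNReal.ofReal (‖fderiv ℝ u x‖ ^ p * sg x ^ ((1 - δ) * p - n))) ^ (1 / p) := by
  have hder : ∀ x ∈ ext n R, ‖iteratedFDerivWithin ℝ 1 u (ext n R) x‖ = ‖fderiv ℝ u x‖ :=
    fun x hx => by
      rw [norm_iteratedFDerivWithin_one _ ((isOpen_ext R).uniqueDiffWithinAt hx),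
        fderivWithin_of_isOpen (isOpen_ext R) hx]
  simp only [wnorm, Finset.sum_range_succ, Finset.sum_range_zero, zero_add, Nat.cast_zero,
    Nat.cast_one, norm_iteratedFDerivWithin_zero]
  congr 2
  exact setLIntegral_congr_fun (isOpen_ext R).measurableSet fun x hx => by rw [hder x hx]

theorem enorm_mul_sg_rpow_le {F : Type*} [NormedAddCommGroup F] [NormedSpace ℝ F]
    [CompleteSpace F] {n : ℕ} {p : ℝ} (δ : ℝ) (hnp : (n : ℝ) < p) {f : Eu n → F}
    (hf : ContDiffOn ℝ 1 f (ext n 1)) {x : Eu n} (hx : x ∈ ext n 1) :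
    ‖f x‖ₑ * ENNReal.ofReal (sg x ^ (-δ)) *
        (ENNReal.ofReal (2 ^ (-(n / p))) * volume (ball (0 : Eu n) 1) ^ (1 / p)) ≤
      ENNReal.ofReal (2 ^ |-δ - n / p|) *
          (∫⁻ y in ext n 1, ENNReal.ofReal (‖f y‖ ^ p * sg y ^ ((0 - δ) * p - n))) ^ (1 / p) +
        ENNReal.ofReal (2 ^ |1 - δ - n / p| / (1 - n / p)) *
          (∫⁻ y in ext n 1,
            ENNReal.ofReal (‖fderiv ℝ f y‖ ^ p * sg y ^ ((1 - δ) * p - n))) ^ (1 / p) := by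
  obtain ⟨c, hxc, hBE, hw⟩ := exists_ball_subset_ext_sg_le hx
  have hp : 1 < p := lt_of_le_of_lt (by exact_mod_cast pos_of_mem_ext zero_le_one hx) hnp
  have hp0 : 0 < p := by linarith
  set S := sg x
  have hS : 0 < S := sg_pos x
  set r := S / 2
  have hr : 0 < r := by positivity
  have h2r : 2 * r = S := mul_div_cancel₀ S two_ne_zero
  have hM := enorm_mul_measure_ball_rpow_le volume (isOpen_ext 1) hf hr hBE hx hxc hp
    (by simpa using hnp)
  rw [finrank_euclideanSpace_fin] at hM
  have hvol := addHaar_ball_rpow volume c hr hp0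
  rw [finrank_euclideanSpace_fin] at hvol
  have h₀ := rpow_mul_setLIntegral_rpow_le (μ := volume) measurableSet_ball hBE hS hw f hp0
    (-δ - n / p)
  have h₁ := rpow_mul_setLIntegral_rpow_le (μ := volume) measurableSet_ball hBE hS hw
    (fderiv ℝ f) hp0 (1 - δ - n / p)
  have hexp : ∀ a : ℝ, (a - n / p) * p = a * p - n := fun a => by
    rw [sub_mul, div_mul_cancel₀ _ hp0.ne']
  rw [show (-δ - n / p) * p = (0 - δ) * p - n by rw [← hexp]; ring] at h₀
  rw [hexp] at h₁
  have e₀ : S ^ (-δ) * 2 ^ (-(n / p)) = S ^ (-δ - n / p) * r ^ (n / p) := by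
    rw [Real.div_rpow hS.le zero_le_two, Real.rpow_neg zero_le_two, mul_div_assoc',
      ← Real.rpow_add hS, sub_add_cancel]
    exact (div_eq_mul_inv _ _).symm
  have e₁ : S ^ (-δ - n / p) * (2 * r / (1 - n / p)) = S ^ (1 - δ - n / p) * (1 / (1 - n / p)) := by
    rw [h2r, show 1 - δ - n / p = 1 + (-δ - n / p) by ring,
      Real.rpow_add hS, Real.rpow_one]
    ring
  calc ‖f x‖ₑ * ENNReal.ofReal (S ^ (-δ)) *
        (ENNReal.ofReal (2 ^ (-(n / p))) * volume (ball (0 : Eu n) 1) ^ (1 / p))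
      = ENNReal.ofReal (S ^ (-δ - n / p)) * (‖f x‖ₑ * volume (ball c r) ^ (1 / p)) := by
        rw [hvol, mul_assoc _ (ENNReal.ofReal _), ← mul_assoc (ENNReal.ofReal _),
          ← ENNReal.ofReal_mul (by positivity), e₀, ENNReal.ofReal_mul (by positivity)]
        ring
    _ ≤ ENNReal.ofReal (S ^ (-δ - n / p)) *
          ((∫⁻ z in ball c r, ‖f z‖ₑ ^ p) ^ (1 / p) + ENNReal.ofReal (2 * r / (1 - n / p)) *
            (∫⁻ z in ball c r, ‖fderiv ℝ f z‖ₑ ^ p) ^ (1 / p)) := by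
        gcongr
    _ = ENNReal.ofReal (S ^ (-δ - n / p)) * (∫⁻ z in ball c r, ‖f z‖ₑ ^ p) ^ (1 / p) +
          ENNReal.ofReal (1 / (1 - n / p)) * (ENNReal.ofReal (S ^ (1 - δ - n / p)) *
            (∫⁻ z in ball c r, ‖fderiv ℝ f z‖ₑ ^ p) ^ (1 / p)) := by
        rw [mul_add, ← mul_assoc (ENNReal.ofReal _) (ENNReal.ofReal _),
          ← ENNReal.ofReal_mul (by positivity), e₁, ENNReal.ofReal_mul (by positivity)]
        ring
    _ ≤ ENNReal.ofReal (2 ^ |-δ - n / p|) *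
          (∫⁻ y in ext n 1, ENNReal.ofReal (‖f y‖ ^ p * sg y ^ ((0 - δ) * p - n))) ^ (1 / p) +
        ENNReal.ofReal (1 / (1 - n / p)) * (ENNReal.ofReal (2 ^ |1 - δ - n / p|) *
          (∫⁻ y in ext n 1,
            ENNReal.ofReal (‖fderiv ℝ f y‖ ^ p * sg y ^ ((1 - δ) * p - n))) ^ (1 / p)) :=
        add_le_add h₀ (by gcongr)
    _ = _ := by
        rw [div_eq_mul_one_div (2 ^ _), ENNReal.ofReal_mul (by positivity)]
        ring

def sobolevConst (n : ℕ) (p δ : ℝ) : ℝ :=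
  (2 ^ |-δ - n / p| + 2 ^ |1 - δ - n / p| / (1 - n / p)) /
    (2 ^ (-(n / p)) * (volume (ball (0 : Eu n) 1)).toReal ^ (1 / p))

theorem toReal_volume_unit_ball_pos (n : ℕ) : 0 < (volume (ball (0 : Eu n) 1)).toReal :=
  ENNReal.toReal_pos (measure_ball_pos _ _ one_pos).ne' measure_ball_lt_top.ne

theorem sobolevConst_pos {n : ℕ} {p : ℝ} (δ : ℝ) (hnp : (n : ℝ) < p) : 0 < sobolevConst n p δ := by
  have hp : 0 < p := lt_of_le_of_lt n.cast_nonneg hnp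
  have hnp' : 0 < 1 - n / p := by rw [sub_pos, div_lt_one hp]; exact hnp
  have := toReal_volume_unit_ball_pos n
  unfold sobolevConst
  positivity

theorem ofReal_norm_mul_sg_rpow_le {F : Type*} [NormedAddCommGroup F] [NormedSpace ℝ F]
    [CompleteSpace F] {n : ℕ} {p : ℝ} (δ : ℝ) (hnp : (n : ℝ) < p) {f : Eu n → F}
    (hf : ContDiffOn ℝ 1 f (ext n 1)) {x : Eu n} (hx : x ∈ ext n 1) :
    ENNReal.ofReal (‖f x‖ * sg x ^ (-δ)) ≤ ENNReal.ofReal (sobolevConst n p δ) *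
      ((∫⁻ y in ext n 1, ENNReal.ofReal (‖f y‖ ^ p * sg y ^ ((0 - δ) * p - n))) ^ (1 / p) +
        (∫⁻ y in ext n 1,
          ENNReal.ofReal (‖fderiv ℝ f y‖ ^ p * sg y ^ ((1 - δ) * p - n))) ^ (1 / p)) := by
  set I₀ := (∫⁻ y in ext n 1, ENNReal.ofReal (‖f y‖ ^ p * sg y ^ ((0 - δ) * p - n))) ^ (1 / p)
  set I₁ := (∫⁻ y in ext n 1,
    ENNReal.ofReal (‖fderiv ℝ f y‖ ^ p * sg y ^ ((1 - δ) * p - n))) ^ (1 / p)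
  have hp : 0 < p := lt_of_le_of_lt n.cast_nonneg hnp
  have hnp' : 0 < 1 - n / p := by rw [sub_pos, div_lt_one hp]; exact hnp
  set K₀ : ℝ := 2 ^ |-δ - n / p|
  set K₁ : ℝ := 2 ^ |1 - δ - n / p| / (1 - n / p)
  set κ : ℝ := 2 ^ (-(n / p)) * (volume (ball (0 : Eu n) 1)).toReal ^ (1 / p)
  have hκ : 0 < κ := by have := toReal_volume_unit_ball_pos n; positivity
  have hκ' : ENNReal.ofReal κ =
      ENNReal.ofReal (2 ^ (-(n / p))) * volume (ball (0 : Eu n) 1) ^ (1 / p) := by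
    rw [ENNReal.ofReal_mul (by positivity), ← ENNReal.ofReal_rpow_of_nonneg ENNReal.toReal_nonneg
      (by positivity), ENNReal.ofReal_toReal measure_ball_lt_top.ne]
  have hK : ENNReal.ofReal (K₀ + K₁) = ENNReal.ofReal (sobolevConst n p δ) * ENNReal.ofReal κ := by
    rw [← ENNReal.ofReal_mul (sobolevConst_pos δ hnp).le, sobolevConst, div_mul_cancel₀ _ hκ.ne']
  refine (ENNReal.mul_le_mul_iff_left (ENNReal.ofReal_pos.2 hκ).ne' ENNReal.ofReal_ne_top).1 ?_
  calc ENNReal.ofReal (‖f x‖ * sg x ^ (-δ)) * ENNReal.ofReal κ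
      = ‖f x‖ₑ * ENNReal.ofReal (sg x ^ (-δ)) * ENNReal.ofReal κ := by
        rw [ENNReal.ofReal_mul (norm_nonneg _), ofReal_norm]
    _ ≤ ENNReal.ofReal K₀ * I₀ + ENNReal.ofReal K₁ * I₁ := by
        rw [hκ']
        exact enorm_mul_sg_rpow_le δ hnp hf hx
    _ ≤ ENNReal.ofReal (K₀ + K₁) * I₀ + ENNReal.ofReal (K₀ + K₁) * I₁ := by
        gcongr <;> linarith [show 0 ≤ K₀ by positivity, show 0 ≤ K₁ by positivity]
    _ = ENNReal.ofReal (sobolevConst n p δ) * (I₀ + I₁) * ENNReal.ofReal κ := by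
        rw [← mul_add, hK]
        ring

/-- weighted Sobolev embedding. For f ∈ W^{1,p}_δ(ℝⁿ \ B̄₁(0)) with p > n,
there is a constant C (depending only on n, p, δ) such that
|f(x)| ≤ C ‖f‖_{W^{1,p}_δ} σ(x)^δ for all x in the exterior region, i.e.
|f(x)| σ(x)^{-δ} ≤ C ‖f‖_{W^{1,p}_δ}. -/
theorem weighted_sobolev_embedding (n : ℕ) (p δ : ℝ) (hp : (n : ℝ) < p) :
    ∃ C > (0:ℝ), ∀ f : Eu n → ℝ, memW n 1 p δ 1 f →
      ∀ x ∈ ext n 1,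
        ENNReal.ofReal (|f x| * sg x ^ (-δ)) ≤ ENNReal.ofReal C * wnorm n 1 p δ 1 f := by
  refine ⟨sobolevConst n p δ, sobolevConst_pos δ hp, fun f hf x hx => ?_⟩
  rw [wnorm_one_eq, ← Real.norm_eq_abs]
  exact ofReal_norm_mul_sg_rpow_le δ hp hf.1 hx
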